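/- arXiv:1902.01998 — 7 statements merged into one kernel-verified Lean document; each statement's English description precedes it below -/
import Mathlib

section
/- Let x, μ ∈ ℝ^d with x ≠ μ, let v ∈ ℝ^d be a unit vector with ⟨v, (μ − x)/‖μ − x‖⟩ ≥ 1/2, and let d be a real number with (3/4)·‖x − μ‖ ≤ d ≤ (5/4)·‖x − μ‖. Then ‖x + (d/4)·v − μ‖² ≤ (23/25)·‖x − μ‖². -/
open RealInnerProductSpace

section

variable {E : Type*} [NormedAddCommGroup E] [InnerProductSpace ℝ E]

theorem mul_norm_le_inner_of_le_inner_smul_norm_inv {c : ℝ} {v w : E}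
    (h : c ≤ ⟪v, ‖w‖⁻¹ • w⟫) : c * ‖w‖ ≤ ⟪v, w⟫ := by
  rcases eq_or_ne w 0 with rfl | hw
  · simp
  rw [real_inner_smul_right, le_inv_mul_iff₀ (norm_pos_iff.mpr hw)] at h
  linarith

theorem norm_add_smul_sq_le_of_inner_le_neg_half {a v : E} (hv : ‖v‖ = 1) {t : ℝ} (ht : 0 ≤ t)
    (hav : ⟪a, v⟫ ≤ -(‖a‖ / 2)) : ‖a + t • v‖ ^ 2 ≤ ‖a‖ ^ 2 - t * ‖a‖ + t ^ 2 := by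
  rw [norm_add_sq_real, real_inner_smul_right, norm_smul, Real.norm_of_nonneg ht, hv]
  nlinarith

end

theorem stmt4_general {D : ℕ} (x μ : EuclideanSpace ℝ (Fin D))
    (v : EuclideanSpace ℝ (Fin D)) (hv : ‖v‖ = 1)
    (halign : (1 / 2 : ℝ) ≤ (inner ℝ v (‖μ - x‖⁻¹ • (μ - x)) : ℝ))
    (d : ℝ) (hd₁ : (3 / 4 : ℝ) * ‖x - μ‖ ≤ d) (hd₂ : d ≤ (5 / 4 : ℝ) * ‖x - μ‖) :
    ‖x + (d / 4) • v - μ‖ ^ 2 ≤ (23 / 25 : ℝ) * ‖x - μ‖ ^ 2 := by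
  set r := ‖x - μ‖
  have hdescent : ⟪x - μ, v⟫ ≤ -(r / 2) := by
    have h := mul_norm_le_inner_of_le_inner_smul_norm_inv halign
    rw [norm_sub_rev] at h
    rw [← neg_sub, inner_neg_left, real_inner_comm]
    linarith
  calc ‖x + (d / 4) • v - μ‖ ^ 2 = ‖(x - μ) + (d / 4) • v‖ ^ 2 := by rw [add_sub_right_comm]
    _ ≤ r ^ 2 - d / 4 * r + (d / 4) ^ 2 :=
      norm_add_smul_sq_le_of_inner_le_neg_half hv (by linarith) hdescent
    -- the convex bound in d peaks at d = 3r/4, where it is (217/256) r ^ 2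
    _ ≤ 23 / 25 * r ^ 2 := by nlinarith [mul_nonneg (sub_nonneg.mpr hd₁) (sub_nonneg.mpr hd₂)]

theorem stmt4 {D : ℕ} (x μ : EuclideanSpace ℝ (Fin D)) (hxμ : x ≠ μ)
    (v : EuclideanSpace ℝ (Fin D)) (hv : ‖v‖ = 1)
    (halign : (1 / 2 : ℝ) ≤ (inner ℝ v (‖μ - x‖⁻¹ • (μ - x)) : ℝ))
    (d : ℝ) (hd₁ : (3 / 4 : ℝ) * ‖x - μ‖ ≤ d) (hd₂ : d ≤ (5 / 4 : ℝ) * ‖x - μ‖) :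
    ‖x + (d / 4) • v - μ‖ ^ 2 ≤ (23 / 25 : ℝ) * ‖x - μ‖ ^ 2 :=
  stmt4_general x μ v hv halign d hd₁ hd₂
end

section
/- Let x, μ ∈ ℝ^d with x ≠ μ, let g ∈ ℝ^d be a unit vector with ⟨g, (μ − x)/‖μ − x‖⟩ ≥ 1/15, and let d be a real number with 0.95·‖x − μ‖ ≤ d ≤ 1.25·‖x − μ‖. Then ‖x + (d/20)·g − μ‖² ≤ (1 − 1/500)·‖x − μ‖². -/
/-!
Write `v = x - μ` and `t = ⟪g, μ - x⟫ ≥ ‖v‖ / 15`. Expanding the square,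
`‖v + (d/20) g‖² = ‖v‖² - (d/10) t + d²/400 ≤ ‖v‖² - d ‖v‖/150 + d²/400`, and the quadratic
`15 u² - 40 u + 12` is nonpositive for `u = d / ‖v‖ ∈ [0.95, 1.25]` (its roots are about 0.35 and 2.32).
-/

open RealInnerProductSpace

section

variable {E : Type*} [NormedAddCommGroup E] [InnerProductSpace ℝ E]

theorem mul_norm_le_inner_of_le_inner_normalize {c : ℝ} (hc : 0 < c) {g w : E}
    (h : c ≤ ⟪g, ‖w‖⁻¹ • w⟫) : c * ‖w‖ ≤ ⟪g, w⟫ := by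
  rw [real_inner_smul_right] at h
  have hw : ‖w‖ ≠ 0 := by
    rintro hw
    rw [hw, inv_zero, zero_mul] at h
    exact hc.not_ge h
  calc c * ‖w‖ ≤ ‖w‖⁻¹ * ⟪g, w⟫ * ‖w‖ := by gcongr
    _ = ⟪g, w⟫ := by field_simp

theorem norm_add_smul_sq_of_norm_eq_one {g : E} (hg : ‖g‖ = 1) (v : E) (s : ℝ) :
    ‖v + s • g‖ ^ 2 = ‖v‖ ^ 2 + 2 * s * ⟪g, v⟫ + s ^ 2 := by
  rw [norm_add_sq_real, real_inner_smul_right, real_inner_comm, norm_smul, hg,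
    Real.norm_eq_abs, mul_one, sq_abs]
  ring

theorem norm_add_smul_sq_le_of_neg_inner {g : E} (hg : ‖g‖ = 1) {v : E}
    (halign : ‖v‖ / 15 ≤ -⟪g, v⟫) {d : ℝ} (hd₁ : 0.95 * ‖v‖ ≤ d) (hd₂ : d ≤ 1.25 * ‖v‖) :
    ‖v + (d / 20) • g‖ ^ 2 ≤ (1 - 1 / 500) * ‖v‖ ^ 2 := by
  rw [norm_add_smul_sq_of_norm_eq_one hg]
  have hd : 0 ≤ d := le_trans (by positivity) hd₁
  nlinarith [mul_nonneg (sub_nonneg.2 hd₁) (sub_nonneg.2 hd₂),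
    mul_le_mul_of_nonneg_left halign hd]

end

theorem stmt5_general {D : ℕ} (x μ : EuclideanSpace ℝ (Fin D))
    (g : EuclideanSpace ℝ (Fin D)) (hg : ‖g‖ = 1)
    (halign : (1 / 15 : ℝ) ≤ (inner ℝ g (‖μ - x‖⁻¹ • (μ - x)) : ℝ))
    (d : ℝ) (hd₁ : (0.95 : ℝ) * ‖x - μ‖ ≤ d) (hd₂ : d ≤ (1.25 : ℝ) * ‖x - μ‖) :
    ‖x + (d / 20) • g - μ‖ ^ 2 ≤ (1 - 1 / 500 : ℝ) * ‖x - μ‖ ^ 2 := by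
  have hv : ‖x - μ‖ / 15 ≤ -⟪g, x - μ⟫ := by
    have := mul_norm_le_inner_of_le_inner_normalize (by norm_num) halign
    rw [← neg_sub μ x, inner_neg_right, neg_neg, norm_neg]
    linarith
  rw [add_sub_right_comm]
  exact norm_add_smul_sq_le_of_neg_inner hg hv hd₁ hd₂

theorem stmt5 {D : ℕ} (x μ : EuclideanSpace ℝ (Fin D)) (hxμ : x ≠ μ)
    (g : EuclideanSpace ℝ (Fin D)) (hg : ‖g‖ = 1)
    (halign : (1 / 15 : ℝ) ≤ (inner ℝ g (‖μ - x‖⁻¹ • (μ - x)) : ℝ))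
    (d : ℝ) (hd₁ : (0.95 : ℝ) * ‖x - μ‖ ≤ d) (hd₂ : d ≤ (1.25 : ℝ) * ‖x - μ‖) :
    ‖x + (d / 20) • g - μ‖ ^ 2 ≤ (1 - 1 / 500 : ℝ) * ‖x - μ‖ ^ 2 :=
  stmt5_general x μ g hg halign d hd₁ hd₂
end

section
/- Let Z_1,…,Z_k ∈ ℝ^d satisfy the r*-spread condition around μ for some r* > 0, let ε > 0, and let T be a natural number with T ≥ 50·log(‖μ‖/ε). Suppose x_0 = 0 and for each t ∈ {0,…,T−1}: d_t > 0, there exists a unit vector v_t ∈ ℝ^d with |{i : ⟨Z_i − x_t, v_t⟩ ≥ d_t}| ≥ 0.9·k, for every r > d_t and every unit vector v it holds that |{i : ⟨Z_i − x_t, v⟩ ≥ r}| < 0.9·k, and x_{t+1} = x_t + (1/4)·d_t·v_t; let the same two properties of d_T, v_T hold at t = T. Let t* ∈ {0,…,T} be an index minimizing d_t and set x* = x_{t*}. Then ‖x* − μ‖ ≤ max(2·ε, 6·r*). -/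
noncomputable section

/-- `Z₁,…,Z_k` satisfy the `r`-spread condition around `μ`: along every unit direction `v`,
the number of indices with `⟨Z i − μ, v⟩ ≥ r` is at most `0.05·k`. -/
def SpreadCond {k D : ℕ} (Z : Fin k → EuclideanSpace ℝ (Fin D))
    (μ : EuclideanSpace ℝ (Fin D)) (r : ℝ) : Prop :=
  ∀ v : EuclideanSpace ℝ (Fin D), ‖v‖ = 1 →
    (({i : Fin k | r ≤ (inner ℝ (Z i - μ) v : ℝ)}).ncard : ℝ) ≤ 0.05 * k

/-!
Write `y` for an iterate, `d` for its depth radius and `w` for its direction.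
Since `90%` of the points lie at depth `≥ d` along `w` but only `5%` lie beyond `r*` from `μ`
along `w`, some point witnesses `⟨μ - y, w⟩ > d - r*`: the step points towards `μ`. Conversely,
`95%` of the points lie beyond `‖y - μ‖ - r*` along the direction from `y` to `μ`, so maximality
of `d` forces `‖y - μ‖ ≤ d + r*`. If the minimal-depth iterate were farther than `6 r*` from `μ`,
every `d_t` would exceed `5 r*`, and these two facts make each step contract the distance to `μ`
by `7/8`. After `T ≥ 50 log(‖μ‖/ε)` steps the distance is below `ε`, while the first fact and
`d_T > max (5 r*) (2ε - r*)` keep it above `ε`.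
-/

open RealInnerProductSpace

section InnerProductSpace

variable {E : Type*} [NormedAddCommGroup E] [InnerProductSpace ℝ E]

theorem exists_norm_eq_one_inner_eq_norm {w : E} (hw : ‖w‖ = 1) (z : E) :
    ∃ u : E, ‖u‖ = 1 ∧ ⟪z, u⟫ = ‖z‖ := by
  rcases eq_or_ne z 0 with rfl | hz
  · exact ⟨w, hw, by simp⟩
  · refine ⟨‖z‖⁻¹ • z, norm_smul_inv_norm hz, ?_⟩
    rw [real_inner_smul_right, real_inner_self_eq_norm_sq]
    field_simp

/-- The step lowers the squared distance by at least `27 d² / 80`, and `d ≥ 5 ‖y - μ‖ / 6`;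
together these give exactly the factor `(7 / 8)²`. -/
theorem norm_add_smul_sub_le {y μ w : E} {d r : ℝ} (hw : ‖w‖ = 1)
    (hclose : ‖y - μ‖ ≤ d + r) (hdir : d - r ≤ ⟪μ - y, w⟫) (hr : 5 * r ≤ d) :
    ‖y + (1 / 4 * d) • w - μ‖ ≤ 7 / 8 * ‖y - μ‖ := by
  have hd : 0 ≤ d := by linarith [norm_nonneg (y - μ)]
  have hsq : ‖y + (1 / 4 * d) • w - μ‖ ^ 2
      = ‖y - μ‖ ^ 2 - 1 / 2 * d * ⟪μ - y, w⟫ + (1 / 4 * d) ^ 2 := by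
    rw [add_sub_right_comm, norm_add_sq_real, real_inner_smul_right, norm_smul,
      Real.norm_of_nonneg (by positivity), hw, ← neg_sub μ y, inner_neg_left]
    ring
  refine le_of_sq_le_sq ?_ (by positivity)
  rw [hsq]
  nlinarith [mul_le_mul_of_nonneg_left hdir hd, norm_nonneg (y - μ)]

variable {ι : Type*} [Finite ι]

theorem sub_lt_inner_of_ncard_lt (Z : ι → E) {μ y u : E} {r d : ℝ}
    (h : {i | r ≤ ⟪Z i - μ, u⟫}.ncard < {i | d ≤ ⟪Z i - y, u⟫}.ncard) :
    d - r < ⟪μ - y, u⟫ := by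
  obtain ⟨i, hd, hr⟩ := Set.exists_mem_notMem_of_ncard_lt_ncard h
  have hsplit : Z i - y = (Z i - μ) + (μ - y) := by abel
  simp only [Set.mem_ofPred_eq, not_le, hsplit, inner_add_left] at hd hr
  linarith

theorem card_le_ncard_add_ncard (Z : ι → E) {μ y u : E} {r s : ℝ} (h : s + r ≤ ⟪μ - y, u⟫) :
    Nat.card ι ≤ {i | r ≤ ⟪Z i - μ, -u⟫}.ncard + {i | s ≤ ⟪Z i - y, u⟫}.ncard := by
  rw [← Set.ncard_add_ncard_compl {i | r ≤ ⟪Z i - μ, -u⟫}]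
  gcongr
  · exact Set.toFinite _
  intro i hi
  have hsplit : Z i - y = (Z i - μ) + (μ - y) := by abel
  simp only [Set.mem_compl_iff, Set.mem_ofPred_eq, not_le, inner_neg_right, hsplit,
    inner_add_left] at hi ⊢
  linarith

end InnerProductSpace

theorem pow_mul_le_of_log_div_le {q a ε : ℝ} {T : ℕ} (hq : 0 < q) (hε : 0 < ε)
    (hT : Real.log (a / ε) ≤ T * Real.log q⁻¹) : q ^ T * a ≤ ε := by
  rcases le_or_gt a 0 with ha | ha
  · nlinarith [pow_pos hq T]
  have hdiv : a / ε ≤ q⁻¹ ^ T := by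
    rwa [← Real.log_le_log_iff (by positivity) (by positivity), Real.log_pow]
  rw [div_le_iff₀ hε, inv_pow] at hdiv
  calc q ^ T * a ≤ q ^ T * ((q ^ T)⁻¹ * ε) := by gcongr
    _ = ε := by field_simp

theorem seven_eighths_pow_mul_le {a ε : ℝ} {T : ℕ} (hε : 0 < ε)
    (hT : 50 * Real.log (a / ε) ≤ T) : (7 / 8 : ℝ) ^ T * a ≤ ε := by
  refine pow_mul_le_of_log_div_le (by norm_num) hε ?_
  have hlog : (1 / 8 : ℝ) ≤ Real.log (7 / 8)⁻¹ := by
    have := Real.one_sub_inv_le_log_of_pos (x := (7 / 8 : ℝ)⁻¹) (by norm_num)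
    norm_num at this ⊢
    linarith
  nlinarith [(Nat.cast_nonneg T : (0 : ℝ) ≤ T)]

namespace SpreadCond

variable {k D : ℕ} {Z : Fin k → EuclideanSpace ℝ (Fin D)} {μ : EuclideanSpace ℝ (Fin D)}
  {r : ℝ}

theorem sub_lt_inner (hZ : SpreadCond Z μ r) {y u : EuclideanSpace ℝ (Fin D)} {d : ℝ}
    (hu : ‖u‖ = 1) (hdeep : 0.05 * k < ({i | d ≤ ⟪Z i - y, u⟫}.ncard : ℝ)) :
    d - r < ⟪μ - y, u⟫ :=
  sub_lt_inner_of_ncard_lt Z (by exact_mod_cast (hZ u hu).trans_lt hdeep)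

theorem norm_sub_le (hZ : SpreadCond Z μ r) {y w : EuclideanSpace ℝ (Fin D)} {d : ℝ}
    (hw : ‖w‖ = 1) (hmax : ∀ s, d < s → ∀ u : EuclideanSpace ℝ (Fin D), ‖u‖ = 1 →
      ({i | s ≤ ⟪Z i - y, u⟫}.ncard : ℝ) < 0.95 * k) :
    ‖y - μ‖ ≤ d + r := by
  by_contra! hfar
  obtain ⟨u, hu, hμy⟩ := exists_norm_eq_one_inner_eq_norm hw (μ - y)
  obtain ⟨s, hds, hs⟩ := exists_between (lt_sub_iff_add_lt.mpr hfar)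
  have hcard := card_le_ncard_add_ncard Z (s := s) (r := r) (u := u)
    (by rw [hμy, norm_sub_rev]; linarith)
  rw [Nat.card_eq_fintype_card, Fintype.card_fin] at hcard
  have hcard' : (k : ℝ) ≤ {i | r ≤ ⟪Z i - μ, -u⟫}.ncard + {i | s ≤ ⟪Z i - y, u⟫}.ncard := by
    exact_mod_cast hcard
  linarith [hZ (-u) (by rwa [norm_neg]), hmax s hds u hu]

end SpreadCond

theorem stmt6_general {k D : ℕ} (Z : Fin k → EuclideanSpace ℝ (Fin D))
    (μ : EuclideanSpace ℝ (Fin D)) (rstar : ℝ) (hrstar : 0 < rstar)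
    (hspread : SpreadCond Z μ rstar)
    (ε : ℝ) (hε : 0 < ε)
    (T : ℕ) (hT : 50 * Real.log (‖μ‖ / ε) ≤ (T : ℝ))
    (x : ℕ → EuclideanSpace ℝ (Fin D)) (d : ℕ → ℝ)
    (v : ℕ → EuclideanSpace ℝ (Fin D))
    (hx0 : x 0 = 0)
    (hunit : ∀ t, t ≤ T → ‖v t‖ = 1)
    (hlow : ∀ t, t ≤ T →
      (0.9 : ℝ) * k ≤ (({i : Fin k | d t ≤ (inner ℝ (Z i - x t) (v t) : ℝ)}).ncard : ℝ))
    (hup : ∀ t, t ≤ T → ∀ r : ℝ, d t < r → ∀ u : EuclideanSpace ℝ (Fin D), ‖u‖ = 1 →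
      (({i : Fin k | r ≤ (inner ℝ (Z i - x t) u : ℝ)}).ncard : ℝ) < 0.9 * k)
    (hstep : ∀ t, t < T → x (t + 1) = x t + ((1 / 4 : ℝ) * d t) • v t)
    (tstar : ℕ) (htstar : tstar ≤ T) (hmin : ∀ t, t ≤ T → d tstar ≤ d t) :
    ‖x tstar - μ‖ ≤ max (2 * ε) (6 * rstar) := by
  have hk : (0 : ℝ) < k := by
    have := hup 0 T.zero_le (d 0 + 1) (lt_add_one _) (v 0) (hunit 0 T.zero_le)
    linarith [(Nat.cast_nonneg (α := ℝ) _).trans_lt this]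
  have hclose (t : ℕ) (ht : t ≤ T) : ‖x t - μ‖ ≤ d t + rstar :=
    hspread.norm_sub_le (hunit t ht) fun s hs u hu => (hup t ht s hs u hu).trans (by linarith)
  have hdir (t : ℕ) (ht : t ≤ T) : d t - rstar < ⟪μ - x t, v t⟫ :=
    hspread.sub_lt_inner (hunit t ht) (by linarith [hlow t ht])
  by_contra! hfar
  have hdeep (t : ℕ) (ht : t ≤ T) : 5 * rstar < d t ∧ 2 * ε - rstar < d t := by
    have := hclose tstar htstar
    have := hmin t ht
    constructor <;> linarith [le_max_left (2 * ε) (6 * rstar), le_max_right (2 * ε) (6 * rstar)]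
  have hdecay : ‖x T - μ‖ ≤ (7 / 8) ^ T * ‖x 0 - μ‖ := by
    refine le_geom (u := fun t => ‖x t - μ‖) (by norm_num) T fun t ht => ?_
    rw [hstep t ht]
    exact norm_add_smul_sub_le (hunit t ht.le) (hclose t ht.le) (hdir t ht.le).le
      (hdeep t ht.le).1.le
  rw [hx0, zero_sub, norm_neg] at hdecay
  have hnear := hdecay.trans (seven_eighths_pow_mul_le hε hT)
  have hfarT : d T - rstar < ‖x T - μ‖ := by
    have := real_inner_le_norm (μ - x T) (v T)
    rw [hunit T le_rfl, mul_one, norm_sub_rev] at this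
    linarith [hdir T le_rfl]
  linarith [hdeep T le_rfl]

theorem stmt6 {k D : ℕ} (Z : Fin k → EuclideanSpace ℝ (Fin D))
    (μ : EuclideanSpace ℝ (Fin D)) (rstar : ℝ) (hrstar : 0 < rstar)
    (hspread : SpreadCond Z μ rstar)
    (ε : ℝ) (hε : 0 < ε)
    (T : ℕ) (hT : 50 * Real.log (‖μ‖ / ε) ≤ (T : ℝ))
    (x : ℕ → EuclideanSpace ℝ (Fin D)) (d : ℕ → ℝ)
    (v : ℕ → EuclideanSpace ℝ (Fin D))
    (hx0 : x 0 = 0)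
    (hdpos : ∀ t, t < T → 0 < d t)
    (hunit : ∀ t, t ≤ T → ‖v t‖ = 1)
    (hlow : ∀ t, t ≤ T →
      (0.9 : ℝ) * k ≤ (({i : Fin k | d t ≤ (inner ℝ (Z i - x t) (v t) : ℝ)}).ncard : ℝ))
    (hup : ∀ t, t ≤ T → ∀ r : ℝ, d t < r → ∀ u : EuclideanSpace ℝ (Fin D), ‖u‖ = 1 →
      (({i : Fin k | r ≤ (inner ℝ (Z i - x t) u : ℝ)}).ncard : ℝ) < 0.9 * k)
    (hstep : ∀ t, t < T → x (t + 1) = x t + ((1 / 4 : ℝ) * d t) • v t)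
    (tstar : ℕ) (htstar : tstar ≤ T) (hmin : ∀ t, t ≤ T → d tstar ≤ d t) :
    ‖x tstar - μ‖ ≤ max (2 * ε) (6 * rstar) :=
  stmt6_general Z μ rstar hrstar hspread ε hε T hT x d v hx0 hunit hlow hup hstep tstar htstar hmin
end
end

section
/- Let Y = (Y_1,…,Y_k) be any k points in ℝ^d and let Y' = (Y_1,…,Y_{i−1}, Y_i', Y_{i+1},…,Y_k) be the same points with the i-th point replaced by an arbitrary Y_i' ∈ ℝ^d. Fix x ∈ ℝ^d and r > 0, and let m and m' be the optimal values of MT(x,r,Y) and MT(x,r,Y') respectively. Then |m − m'| ≤ 1. -/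
noncomputable section

/-- The index type of the MT semidefinite program: a distinguished index `1` (`Sum.inl ()`),
indices `b i` for `i : Fin k` (`Sum.inr (Sum.inl i)`) and indices `v j` for `j : Fin D`
(`Sum.inr (Sum.inr j)`). -/
abbrev MTIdx (k D : ℕ) := Unit ⊕ Fin k ⊕ Fin D

/-- The distinguished index `1`. -/
abbrev idx1 {k D : ℕ} : MTIdx k D := Sum.inl ()

/-- The index `b i`. -/
abbrev idxb {k D : ℕ} (i : Fin k) : MTIdx k D := Sum.inr (Sum.inl i)

/-- The index `v j`. -/
abbrev idxv {k D : ℕ} (j : Fin D) : MTIdx k D := Sum.inr (Sum.inr j)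

/-- A real symmetric `(1+k+D) × (1+k+D)` matrix `X` is `MT(x, r, Z)`-feasible if it is positive
semidefinite, `X_{1,1} = 1`, `X_{1,b_i} = X_{b_i,b_i}`, `∑ j, X_{v_j,v_j} = 1` and
`⟨v_{b_i}, Z_i − x⟩ ≥ X_{b_i,b_i}·r` for all `i`, where `v_{b_i} = (X_{b_i,v_1},…,X_{b_i,v_D})`. -/
def MTFeasible {k D : ℕ} (Z : Fin k → EuclideanSpace ℝ (Fin D))
    (x : EuclideanSpace ℝ (Fin D)) (r : ℝ)
    (X : Matrix (MTIdx k D) (MTIdx k D) ℝ) : Prop :=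
  X.PosSemidef ∧
  X idx1 idx1 = 1 ∧
  (∀ i : Fin k, X idx1 (idxb i) = X (idxb i) (idxb i)) ∧
  (∑ j : Fin D, X (idxv j) (idxv j) = 1) ∧
  (∀ i : Fin k, X (idxb i) (idxb i) * r ≤ ∑ j : Fin D, X (idxb i) (idxv j) * (Z i - x) j)

/-- The objective `∑ i, X_{1, b_i}` of the MT semidefinite program. -/
def MTobj {k D : ℕ} (X : Matrix (MTIdx k D) (MTIdx k D) ℝ) : ℝ :=
  ∑ i : Fin k, X idx1 (idxb i)

/-- The sum of diagonal entries `∑ i, X_{b_i, b_i}`. -/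
def MTdiag {k D : ℕ} (X : Matrix (MTIdx k D) (MTIdx k D) ℝ) : ℝ :=
  ∑ i : Fin k, X (idxb i) (idxb i)

/-- The optimal value of `MT(x, r, Z)`: the supremum of `∑ i, X_{1,b_i}` over feasible `X`. -/
def MTval {k D : ℕ} (Z : Fin k → EuclideanSpace ℝ (Fin D))
    (x : EuclideanSpace ℝ (Fin D)) (r : ℝ) : ℝ :=
  sSup {s : ℝ | ∃ X : Matrix (MTIdx k D) (MTIdx k D) ℝ, MTFeasible Z x r X ∧ s = MTobj X}

/-!
Zeroing the row and the column of `b_i` of a feasible matrix (a congruence by a diagonal 0/1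
matrix) keeps it positive semidefinite and removes the only constraint that mentions `Z_i`, so
it is feasible for any configuration that differs from `Z` only at `i`. The objective drops by
`X_{1,b_i}`, and the `2 × 2` minor on `{1, b_i}` forces `X_{1,b_i} = X_{b_i,b_i} ∈ [0, 1]`.
Hence each optimal value is at most the other plus one.
-/

lemma Matrix.PosSemidef.mul_self_apply_le {n : Type*} [Fintype n] [DecidableEq n]
    {A : Matrix n n ℝ} (hA : A.PosSemidef) (a b : n) :
    A a b * A a b ≤ A a a * A b b := by
  have hdet := (hA.submatrix ![a, b]).det_nonneg
  have hsymm : A b a = A a b := by simpa using hA.1.apply a b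
  rw [Matrix.det_fin_two] at hdet
  simp only [Matrix.submatrix_apply, Matrix.cons_val_zero, Matrix.cons_val_one, hsymm] at hdet
  linarith

namespace MTFeasible

variable {k D : ℕ} {Z : Fin k → EuclideanSpace ℝ (Fin D)} {x : EuclideanSpace ℝ (Fin D)} {r : ℝ}
  {X : Matrix (MTIdx k D) (MTIdx k D) ℝ}

lemma apply_idx1_idxb_mem_Icc (hX : MTFeasible Z x r X) (j : Fin k) :
    X idx1 (idxb j) ∈ Set.Icc 0 1 := by
  obtain ⟨hpsd, h11, hbb, -, -⟩ := hX
  have hminor := hpsd.mul_self_apply_le idx1 (idxb j)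
  rw [h11, ← hbb] at hminor
  have hnonneg : 0 ≤ X idx1 (idxb j) := hbb j ▸ hpsd.diag_nonneg
  exact ⟨hnonneg, by nlinarith⟩

lemma MTobj_nonneg (hX : MTFeasible Z x r X) : 0 ≤ MTobj X :=
  Finset.sum_nonneg fun j _ => (hX.apply_idx1_idxb_mem_Icc j).1

lemma MTobj_le (hX : MTFeasible Z x r X) : MTobj X ≤ k := by
  simpa [MTobj] using
    Finset.sum_le_sum fun j (_ : j ∈ Finset.univ) => (hX.apply_idx1_idxb_mem_Icc j).2

end MTFeasible

lemma bddAbove_MTobj_feasible {k D : ℕ} (Z : Fin k → EuclideanSpace ℝ (Fin D))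
    (x : EuclideanSpace ℝ (Fin D)) (r : ℝ) :
    BddAbove
      {s : ℝ | ∃ X : Matrix (MTIdx k D) (MTIdx k D) ℝ, MTFeasible Z x r X ∧ s = MTobj X} := by
  refine ⟨k, ?_⟩
  rintro _ ⟨X, hX, rfl⟩
  exact hX.MTobj_le

lemma MTval_nonneg {k D : ℕ} (Z : Fin k → EuclideanSpace ℝ (Fin D))
    (x : EuclideanSpace ℝ (Fin D)) (r : ℝ) : 0 ≤ MTval Z x r := by
  refine Real.sSup_nonneg ?_
  rintro _ ⟨X, hX, rfl⟩
  exact hX.MTobj_nonneg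

def MTzeroIdxb {k D : ℕ} (i : Fin k) (X : Matrix (MTIdx k D) (MTIdx k D) ℝ) :
    Matrix (MTIdx k D) (MTIdx k D) ℝ :=
  let d : MTIdx k D → ℝ := fun a => if a = idxb i then 0 else 1
  Matrix.diagonal d * X * Matrix.diagonal d

section MTzeroIdxb

variable {k D : ℕ} (i : Fin k) {X : Matrix (MTIdx k D) (MTIdx k D) ℝ}

lemma MTzeroIdxb_apply (a b : MTIdx k D) :
    MTzeroIdxb i X a b = if a = idxb i ∨ b = idxb i then 0 else X a b := by
  by_cases ha : a = idxb i <;> by_cases hb : b = idxb i <;>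
    simp [MTzeroIdxb, Matrix.mul_diagonal, Matrix.diagonal_mul, ha, hb]

lemma MTzeroIdxb_posSemidef (hX : X.PosSemidef) :
    (MTzeroIdxb i X).PosSemidef := by
  simpa [MTzeroIdxb, Matrix.diagonal_conjTranspose] using
    hX.mul_mul_conjTranspose_same (Matrix.diagonal fun a => if a = idxb i then (0 : ℝ) else 1)

lemma MTobj_MTzeroIdxb : MTobj (MTzeroIdxb i X) = MTobj X - X idx1 (idxb i) := by
  simp [MTobj, MTzeroIdxb_apply, Finset.sum_ite, Finset.filter_ne', Finset.sum_erase_eq_sub]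

lemma MTFeasible.MTzeroIdxb {Z Z' : Fin k → EuclideanSpace ℝ (Fin D)}
    (hZ : ∀ j ≠ i, Z' j = Z j) {x : EuclideanSpace ℝ (Fin D)} {r : ℝ} (hX : MTFeasible Z x r X) :
    MTFeasible Z' x r (MTzeroIdxb i X) := by
  obtain ⟨hpsd, h11, hbb, hvv, hcone⟩ := hX
  refine ⟨MTzeroIdxb_posSemidef i hpsd, ?_, fun j => ?_, ?_, fun j => ?_⟩
  · simpa [MTzeroIdxb_apply] using h11
  · by_cases hj : j = i <;> simp [MTzeroIdxb_apply, hj, hbb j]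
  · simpa [MTzeroIdxb_apply] using hvv
  · by_cases hj : j = i
    · simp [MTzeroIdxb_apply, hj]
    · simpa [MTzeroIdxb_apply, hj, hZ j hj] using hcone j

end MTzeroIdxb

lemma MTval_le_MTval_add_one {k D : ℕ} {Z Z' : Fin k → EuclideanSpace ℝ (Fin D)} {i : Fin k}
    (hZ : ∀ j ≠ i, Z' j = Z j) (x : EuclideanSpace ℝ (Fin D)) (r : ℝ) :
    MTval Z x r ≤ MTval Z' x r + 1 := by
  refine Real.sSup_le ?_ (by linarith [MTval_nonneg Z' x r])
  rintro _ ⟨X, hX, rfl⟩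
  have hle : MTobj (MTzeroIdxb i X) ≤ MTval Z' x r :=
    le_csSup (bddAbove_MTobj_feasible Z' x r) ⟨_, hX.MTzeroIdxb i hZ, rfl⟩
  rw [MTobj_MTzeroIdxb] at hle
  linarith [(hX.apply_idx1_idxb_mem_Icc i).2]

theorem stmt8_general {k D : ℕ} (Y : Fin k → EuclideanSpace ℝ (Fin D))
    (i : Fin k) (Yi' : EuclideanSpace ℝ (Fin D))
    (Y' : Fin k → EuclideanSpace ℝ (Fin D)) (hY' : Y' = Function.update Y i Yi')
    (x : EuclideanSpace ℝ (Fin D)) (r : ℝ)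
    (m m' : ℝ) (hm : m = MTval Y x r) (hm' : m' = MTval Y' x r) :
    |m - m'| ≤ 1 := by
  have hYY' : ∀ j ≠ i, Y' j = Y j := fun j hj => by rw [hY', Function.update_of_ne hj]
  rw [abs_sub_le_iff, hm, hm']
  constructor
  · linarith [MTval_le_MTval_add_one hYY' x r]
  · linarith [MTval_le_MTval_add_one (fun j hj => (hYY' j hj).symm) x r]

theorem stmt8 {k D : ℕ} (Y : Fin k → EuclideanSpace ℝ (Fin D))
    (i : Fin k) (Yi' : EuclideanSpace ℝ (Fin D))
    (Y' : Fin k → EuclideanSpace ℝ (Fin D)) (hY' : Y' = Function.update Y i Yi')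
    (x : EuclideanSpace ℝ (Fin D)) (r : ℝ) (hr : 0 < r)
    (m m' : ℝ) (hm : m = MTval Y x r) (hm' : m' = MTval Y' x r) :
    |m - m'| ≤ 1 :=
  stmt8_general Y i Yi' Y' hY' x r m m' hm hm'
end
end

section
/- Let Z_1,…,Z_k ∈ ℝ^d satisfy the SDP r*-spread condition around μ for some r* > 0. Let X be a real symmetric positive semidefinite (1+k+d)×(1+k+d) matrix, indexed by 1, b_1,…,b_k, v_1,…,v_d, satisfying X_{1,1} = 1, X_{b_i,b_i} = X_{1,b_i} for all i, Σ_{j=1}^d X_{v_j,v_j} = 1, and Σ_{i=1}^k X_{b_i,b_i} ≥ 0.9·k. Then there is a set T ⊆ {1,…,k} with |T| ≥ 0.85·k such that ⟨Z_i − μ, v_{b_i}⟩ < X_{b_i,b_i}·r* for all i ∈ T, where v_{b_i} := (X_{b_i,v_1},…,X_{b_i,v_d}); and there is a set R ⊆ {1,…,k} with |R| ≥ k/3 such that X_{b_j,b_j} ≥ 0.85 for all j ∈ R. -/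
noncomputable section

/-- `Z₁,…,Z_k` satisfy the SDP `rstar`-spread condition around `μ`: for every `r ≥ rstar` and
every `MT(μ, r, Z)`-feasible `X`, one has `∑ i, X_{b_i,b_i} ≤ k / 20`. -/
def SDPSpreadCond {k D : ℕ} (Z : Fin k → EuclideanSpace ℝ (Fin D))
    (μ : EuclideanSpace ℝ (Fin D)) (rstar : ℝ) : Prop :=
  ∀ r : ℝ, rstar ≤ r → ∀ X : Matrix (MTIdx k D) (MTIdx k D) ℝ,
    MTFeasible Z μ r X → MTdiag X ≤ (k : ℝ) / 20

/-! Let `S` be the set of indices `i` whose constraint `⟨v_{b_i}, Z_i − μ⟩ ≥ X_{b_i,b_i} r*` holds.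
Zeroing the rows and columns `b_i` with `i ∉ S` is a congruence by a diagonal `0/1` matrix, so it
keeps `X` positive semidefinite, and the result is `MT(μ, r*, Z)`-feasible; the spread condition
then gives `∑_{i ∈ S} X_{b_i,b_i} ≤ k/20`. The `2 × 2` minor on `{1, b_i}` forces
`X_{b_i,b_i}² ≤ X_{b_i,b_i}`, so every `X_{b_i,b_i}` is at most `1`. Both counting bounds then
follow from `∑ X_{b_i,b_i} ≥ 0.9 k`: the complement of `S` has at least `0.9 k − k/20` elements,
and at least `(0.9 − 0.85) k / 0.15 = k/3` of the entries are `≥ 0.85`. -/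

open Finset

theorem Matrix.PosSemidef.apply_mul_apply_le {n : Type*} [Fintype n] {A : Matrix n n ℝ}
    (hA : A.PosSemidef) (i j : n) : A i j * A j i ≤ A i i * A j j := by
  have h := (hA.submatrix ![i, j]).det_nonneg
  rw [Matrix.det_fin_two] at h
  simpa only [Fin.isValue, Matrix.submatrix_apply, Matrix.cons_val_zero, Matrix.cons_val_one,
    Matrix.cons_val_fin_one, sub_nonneg] using h

theorem Matrix.PosSemidef.apply_le_one_of_apply_eq {n : Type*} [Fintype n] {A : Matrix n n ℝ}
    (hA : A.PosSemidef) {i j : n} (hi : A i i = 1) (hj : A j j = A i j) : A j j ≤ 1 := by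
  have h := hA.apply_mul_apply_le i j
  rw [← hA.isHermitian.apply j i, star_trivial, hi, ← hj, one_mul] at h
  nlinarith [hA.diag_nonneg (i := j)]

theorem Finset.sum_sub_sum_le_card_compl {ι : Type*} [Fintype ι] [DecidableEq ι] {f : ι → ℝ}
    (hf : ∀ i, f i ≤ 1) (s : Finset ι) : ∑ i, f i - ∑ i ∈ s, f i ≤ #sᶜ := by
  rw [← sum_add_sum_compl s f, add_sub_cancel_left]
  simpa using sum_le_card_nsmul sᶜ f 1 fun i _ => hf i

theorem Finset.sum_sub_le_mul_card_filter_le {ι : Type*} (s : Finset ι) {f : ι → ℝ}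
    (hf : ∀ i ∈ s, f i ≤ 1) (t : ℝ) :
    ∑ i ∈ s, (f i - t) ≤ (1 - t) * #{i ∈ s | t ≤ f i} := by
  rw [Finset.card_filter, Nat.cast_sum, Finset.mul_sum]
  refine Finset.sum_le_sum fun i hi => ?_
  split_ifs with h
  · rw [Nat.cast_one, mul_one]
    linarith [hf i hi]
  · rw [Nat.cast_zero, mul_zero]
    linarith [not_le.mp h]

section MTrestrict

variable {k D : ℕ}

def MTmask (S : Finset (Fin k)) : MTIdx k D → ℝ :=
  Sum.elim 1 (Sum.elim (fun i => if i ∈ S then 1 else 0) 1)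

def MTrestrict (S : Finset (Fin k)) (X : Matrix (MTIdx k D) (MTIdx k D) ℝ) :
    Matrix (MTIdx k D) (MTIdx k D) ℝ :=
  Matrix.diagonal (MTmask S) * X * Matrix.diagonal (MTmask S)

theorem MTrestrict_apply (S : Finset (Fin k)) (X : Matrix (MTIdx k D) (MTIdx k D) ℝ)
    (m n : MTIdx k D) : MTrestrict S X m n = MTmask S m * X m n * MTmask S n := by
  simp [MTrestrict, Matrix.diagonal_mul, Matrix.mul_diagonal]

theorem MTdiag_MTrestrict (S : Finset (Fin k)) (X : Matrix (MTIdx k D) (MTIdx k D) ℝ) :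
    MTdiag (MTrestrict S X) = ∑ i ∈ S, X (idxb i) (idxb i) := by
  simp [MTdiag, MTrestrict_apply, MTmask, Finset.sum_ite_mem]

theorem mtFeasible_MTrestrict {Z : Fin k → EuclideanSpace ℝ (Fin D)}
    {x : EuclideanSpace ℝ (Fin D)} {r : ℝ} {X : Matrix (MTIdx k D) (MTIdx k D) ℝ}
    (hpsd : X.PosSemidef) (h11 : X idx1 idx1 = 1)
    (h1b : ∀ i : Fin k, X (idxb i) (idxb i) = X idx1 (idxb i))
    (hvv : ∑ j : Fin D, X (idxv j) (idxv j) = 1) {S : Finset (Fin k)}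
    (hS : ∀ i ∈ S, X (idxb i) (idxb i) * r ≤ ∑ j : Fin D, X (idxb i) (idxv j) * (Z i - x) j) :
    MTFeasible Z x r (MTrestrict S X) := by
  refine ⟨?_, ?_, fun i => ?_, ?_, fun i => ?_⟩
  · simpa [MTrestrict] using hpsd.mul_mul_conjTranspose_same (Matrix.diagonal (MTmask S))
  · simp [MTrestrict_apply, MTmask, h11]
  · by_cases hi : i ∈ S <;> simp [MTrestrict_apply, MTmask, hi, h1b i]
  · simpa [MTrestrict_apply, MTmask] using hvv
  · by_cases hi : i ∈ S
    · simpa [MTrestrict_apply, MTmask, hi] using hS i hi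
    · simp [MTrestrict_apply, MTmask, hi]

end MTrestrict

theorem stmt10_general {k D : ℕ} (Z : Fin k → EuclideanSpace ℝ (Fin D))
    (μ : EuclideanSpace ℝ (Fin D)) (rstar : ℝ)
    (hspread : SDPSpreadCond Z μ rstar)
    (X : Matrix (MTIdx k D) (MTIdx k D) ℝ) (hpsd : X.PosSemidef)
    (h11 : X idx1 idx1 = 1)
    (h1b : ∀ i : Fin k, X (idxb i) (idxb i) = X idx1 (idxb i))
    (hvv : ∑ j : Fin D, X (idxv j) (idxv j) = 1)
    (hbig : (0.9 : ℝ) * k ≤ MTdiag X) :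
    (∃ T : Finset (Fin k), (0.85 : ℝ) * k ≤ (T.card : ℝ) ∧ ∀ i ∈ T,
        ∑ j : Fin D, X (idxb i) (idxv j) * (Z i - μ) j <
          X (idxb i) (idxb i) * rstar) ∧
    (∃ R : Finset (Fin k), (k : ℝ) / 3 ≤ (R.card : ℝ) ∧ ∀ j ∈ R,
        (0.85 : ℝ) ≤ X (idxb j) (idxb j)) := by
  have hle1 (i : Fin k) : X (idxb i) (idxb i) ≤ 1 := hpsd.apply_le_one_of_apply_eq h11 (h1b i)
  set S : Finset (Fin k) :=
    {i | X (idxb i) (idxb i) * rstar ≤ ∑ j : Fin D, X (idxb i) (idxv j) * (Z i - μ) j}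
  have hS : ∑ i ∈ S, X (idxb i) (idxb i) ≤ (k : ℝ) / 20 :=
    MTdiag_MTrestrict S X ▸ hspread rstar le_rfl _
      (mtFeasible_MTrestrict hpsd h11 h1b hvv fun i hi => (mem_filter.1 hi).2)
  unfold MTdiag at hbig
  set R : Finset (Fin k) := {j | 0.85 ≤ X (idxb j) (idxb j)}
  refine ⟨⟨Sᶜ, ?_, fun i hi => ?_⟩, ⟨R, ?_, fun j hj => (mem_filter.1 hj).2⟩⟩
  · linarith [sum_sub_sum_le_card_compl hle1 S]
  · exact not_le.1 fun h => mem_compl.1 hi (mem_filter.2 ⟨mem_univ i, h⟩)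
  · have : ∑ i, (X (idxb i) (idxb i) - 0.85) ≤ (1 - 0.85) * #R :=
      univ.sum_sub_le_mul_card_filter_le (fun i _ => hle1 i) 0.85
    simp only [sum_sub_distrib, sum_const, card_univ, Fintype.card_fin, nsmul_eq_mul] at this
    linarith

theorem stmt10 {k D : ℕ} (Z : Fin k → EuclideanSpace ℝ (Fin D))
    (μ : EuclideanSpace ℝ (Fin D)) (rstar : ℝ) (hrstar : 0 < rstar)
    (hspread : SDPSpreadCond Z μ rstar)
    (X : Matrix (MTIdx k D) (MTIdx k D) ℝ) (hpsd : X.PosSemidef)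
    (h11 : X idx1 idx1 = 1)
    (h1b : ∀ i : Fin k, X (idxb i) (idxb i) = X idx1 (idxb i))
    (hvv : ∑ j : Fin D, X (idxv j) (idxv j) = 1)
    (hbig : (0.9 : ℝ) * k ≤ MTdiag X) :
    (∃ T : Finset (Fin k), (0.85 : ℝ) * k ≤ (T.card : ℝ) ∧ ∀ i ∈ T,
        ∑ j : Fin D, X (idxb i) (idxv j) * (Z i - μ) j <
          X (idxb i) (idxb i) * rstar) ∧
    (∃ R : Finset (Fin k), (k : ℝ) / 3 ≤ (R.card : ℝ) ∧ ∀ j ∈ R,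
        (0.85 : ℝ) ≤ X (idxb j) (idxb j)) :=
  stmt10_general Z μ rstar hspread X hpsd h11 h1b hvv hbig
end
end

section
/- Let Z_1,…,Z_k ∈ ℝ^d satisfy the r*-spread condition around μ for some r* > 0, and let x ∈ ℝ^d with d̃ := ‖x − μ‖ ≥ 20·r*. Then there exists an MT(x, 0.95·d̃, Z)-feasible matrix X with Σ_{i=1}^k X_{1,b_i} ≥ 0.9·k; hence the optimal value of MT(x, 0.95·d̃, Z) is at least 0.9·k. -/
noncomputable section

/-!
Let `u` be the unit vector pointing from `x` to `μ`, and select the indices `i` with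
`⟪u, Z i - x⟫ ≥ 0.95 ‖x - μ‖`. The rank-one matrix `y yᵀ` with `y = (1, 𝟙[i selected], u)` is
feasible. As `⟪u, Z i - x⟫ = ‖x - μ‖ - ⟪Z i - μ, -u⟫` and `r* ≤ 0.05 ‖x - μ‖`, every unselected
index has `⟪Z i - μ, -u⟫ ≥ r*`, so the spread condition in direction `-u` leaves at least `0.95 k`
selected indices. The optimal value dominates this objective because feasible objectives are
bounded by `k`: the principal minor on `1, b i` forces `X 1 (b i) ≤ 1`.
-/

open Matrix Finset
open scoped RealInnerProductSpace

theorem Matrix.posSemidef_vecMulVec_self {n : Type*} [Finite n] (y : n → ℝ) :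
    (vecMulVec y y).PosSemidef := by
  simpa using posSemidef_vecMulVec_self_star y

theorem Matrix.PosSemidef.two_mul_apply_le {n : Type*} [Fintype n] [DecidableEq n]
    {A : Matrix n n ℝ} (hA : A.PosSemidef) (i j : n) : 2 * A i j ≤ A i i + A j j := by
  have hq := hA.dotProduct_mulVec_nonneg (Pi.single i 1 - Pi.single j 1)
  have hsymm : A j i = A i j := by simpa using hA.isHermitian.apply i j
  simp only [star_trivial, mulVec_sub, mulVec_single_one, sub_dotProduct, dotProduct_sub,
    single_dotProduct, one_mul, col_apply] at hq
  linarith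

theorem real_inner_normalize_self {E : Type*} [NormedAddCommGroup E] [InnerProductSpace ℝ E]
    (v : E) : ⟪NormedSpace.normalize v, v⟫ = ‖v‖ := by
  rw [NormedSpace.normalize, real_inner_smul_left, real_inner_self_eq_norm_sq]
  rcases eq_or_ne ‖v‖ 0 with h | h
  · simp [h]
  · field_simp

theorem EuclideanSpace.real_inner_eq_sum {D : ℕ} (u w : EuclideanSpace ℝ (Fin D)) :
    ⟪u, w⟫ = ∑ j, u j * w j := by
  simp [PiLp.inner_apply, mul_comm]

variable {k D : ℕ}

def mtRankOne (Z : Fin k → EuclideanSpace ℝ (Fin D)) (x : EuclideanSpace ℝ (Fin D)) (r : ℝ)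
    (u : EuclideanSpace ℝ (Fin D)) : Matrix (MTIdx k D) (MTIdx k D) ℝ :=
  let y : MTIdx k D → ℝ :=
    Sum.elim 1 (Sum.elim (fun i => if r ≤ ⟪u, Z i - x⟫ then 1 else 0) fun j => u j)
  vecMulVec y y

section

variable (Z : Fin k → EuclideanSpace ℝ (Fin D)) (x : EuclideanSpace ℝ (Fin D)) (r : ℝ)

theorem mtObj_mtRankOne (u : EuclideanSpace ℝ (Fin D)) :
    MTobj (mtRankOne Z x r u) = #{i | r ≤ ⟪u, Z i - x⟫} := by
  simp [MTobj, mtRankOne, vecMulVec_apply]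

theorem mtFeasible_mtRankOne {u : EuclideanSpace ℝ (Fin D)} (hu : ‖u‖ = 1) :
    MTFeasible Z x r (mtRankOne Z x r u) := by
  refine ⟨posSemidef_vecMulVec_self _, by simp [mtRankOne, vecMulVec_apply],
    fun i => by simp [mtRankOne, vecMulVec_apply], ?_, fun i => ?_⟩
  · simp [mtRankOne, vecMulVec_apply, ← EuclideanSpace.real_inner_eq_sum, hu]
  · simp only [mtRankOne, vecMulVec_apply, Sum.elim_inr, Sum.elim_inl, mul_assoc,
      ← Finset.mul_sum, ← EuclideanSpace.real_inner_eq_sum]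
    split_ifs with h <;> simp [h]

theorem MTFeasible.mtObj_le {X : Matrix (MTIdx k D) (MTIdx k D) ℝ} (h : MTFeasible Z x r X) :
    MTobj X ≤ k := by
  obtain ⟨hpsd, h11, h1b, -, -⟩ := h
  calc MTobj X ≤ ∑ _i : Fin k, (1 : ℝ) := Finset.sum_le_sum fun i _ => by
        have := hpsd.two_mul_apply_le idx1 (idxb i)
        linarith [h1b i]
    _ = k := by simp

theorem MTFeasible.mtObj_le_mtVal {X : Matrix (MTIdx k D) (MTIdx k D) ℝ}
    (h : MTFeasible Z x r X) : MTobj X ≤ MTval Z x r :=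
  le_csSup ⟨k, by rintro _ ⟨Y, hY, rfl⟩; exact hY.mtObj_le⟩ ⟨X, h, rfl⟩

end

section

variable {Z : Fin k → EuclideanSpace ℝ (Fin D)} {μ : EuclideanSpace ℝ (Fin D)} {r : ℝ}

theorem SpreadCond.le_card_inner_lt (h : SpreadCond Z μ r) {v : EuclideanSpace ℝ (Fin D)}
    (hv : ‖v‖ = 1) : (0.95 : ℝ) * k ≤ #{i | ⟪Z i - μ, v⟫ < r} := by
  have hfar := h v hv
  rw [Set.ncard_eq_toFinset_card', Set.toFinset_ofPred] at hfar
  have hsplit := card_filter_add_card_filter_not (s := univ) (fun i => r ≤ ⟪Z i - μ, v⟫)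
  simp only [not_le, card_univ, Fintype.card_fin] at hsplit
  have : (#{i | r ≤ ⟪Z i - μ, v⟫} : ℝ) + #{i | ⟪Z i - μ, v⟫ < r} = k := by exact_mod_cast hsplit
  linarith

theorem SpreadCond.le_card_inner_normalize_ge (h : SpreadCond Z μ r)
    {x : EuclideanSpace ℝ (Fin D)} (hxμ : x ≠ μ) (hr : 20 * r ≤ ‖x - μ‖) :
    (0.95 : ℝ) * k ≤ #{i | 0.95 * ‖x - μ‖ ≤ ⟪NormedSpace.normalize (μ - x), Z i - x⟫} := by
  set u := NormedSpace.normalize (μ - x)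
  have hu : ‖-u‖ = 1 := by
    rw [norm_neg, NormedSpace.norm_normalize_eq_one_iff.2 (sub_ne_zero.2 hxμ.symm)]
  refine (h.le_card_inner_lt hu).trans (Nat.cast_le.2 (card_le_card fun i => ?_))
  simp only [mem_filter, mem_univ, true_and, inner_neg_right, neg_lt]
  intro hi
  have hsplit : ⟪u, Z i - x⟫ = ⟪Z i - μ, u⟫ + ‖x - μ‖ := by
    rw [← sub_add_sub_cancel (Z i) μ x, inner_add_right, real_inner_normalize_self,
      real_inner_comm, norm_sub_rev]
  linarith

end

theorem stmt12 {k D : ℕ} (Z : Fin k → EuclideanSpace ℝ (Fin D))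
    (μ : EuclideanSpace ℝ (Fin D)) (rstar : ℝ) (hrstar : 0 < rstar)
    (hspread : SpreadCond Z μ rstar)
    (x : EuclideanSpace ℝ (Fin D)) (hx : 20 * rstar ≤ ‖x - μ‖) :
    (∃ X : Matrix (MTIdx k D) (MTIdx k D) ℝ,
        MTFeasible Z x (0.95 * ‖x - μ‖) X ∧ (0.9 : ℝ) * k ≤ MTobj X) ∧
      (0.9 : ℝ) * k ≤ MTval Z x (0.95 * ‖x - μ‖) := by
  have hxμ : x ≠ μ := by
    rintro rfl
    simp only [sub_self, norm_zero] at hx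
    linarith
  set X := mtRankOne Z x (0.95 * ‖x - μ‖) (NormedSpace.normalize (μ - x))
  have hfeas : MTFeasible Z x (0.95 * ‖x - μ‖) X :=
    mtFeasible_mtRankOne Z x _ (NormedSpace.norm_normalize_eq_one_iff.2 (sub_ne_zero.2 hxμ.symm))
  have hobj : (0.9 : ℝ) * k ≤ MTobj X := by
    rw [mtObj_mtRankOne]
    linarith [hspread.le_card_inner_normalize_ge hxμ hx, (k.cast_nonneg : (0 : ℝ) ≤ k)]
  exact ⟨⟨X, hfeas, hobj⟩, hobj.trans hfeas.mtObj_le_mtVal⟩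
end
end

section
/- Let X be a real symmetric positive semidefinite (1+k+d)×(1+k+d) matrix, indexed by a distinguished index 1, indices b_1,…,b_k and indices v_1,…,v_d, satisfying X_{1,1} = 1 and X_{1,b_i} = X_{b_i,b_i} for all i. Define a real symmetric (1+k+d)×(1+k+d) matrix W, indexed by 1, σ_1,…,σ_k and v_1,…,v_d, by W_{1,1} = 1, W_{σ_i,σ_j} = 4·X_{b_i,b_j} − 2·X_{1,b_i} − 2·X_{1,b_j} + 1, W_{v_i,v_j} = X_{v_i,v_j}, W_{1,v_i} = X_{1,v_i}, W_{1,σ_i} = 2·X_{1,b_i} − 1, and W_{v_i,σ_j} = 2·X_{v_i,b_j} − X_{1,v_i}. Then W is positive semidefinite, W_{σ_i,σ_i} = 1 for all i, and Σ_{j=1}^d W_{v_j,v_j} = Σ_{j=1}^d X_{v_j,v_j}. -/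
noncomputable section

private lemma neg_ite' {c : Prop} [Decidable c] (a b : ℝ) :
    (-if c then a else b) = if c then -a else -b := by split <;> rfl

theorem stmt19 {k D : ℕ}
    (X : Matrix (MTIdx k D) (MTIdx k D) ℝ) (hpsd : X.PosSemidef)
    (h11 : X idx1 idx1 = 1)
    (h1b : ∀ i : Fin k, X idx1 (idxb i) = X (idxb i) (idxb i))
    (W : Matrix (MTIdx k D) (MTIdx k D) ℝ) (hWsymm : W.IsSymm)
    (hW11 : W idx1 idx1 = 1)
    (hWσσ : ∀ i j : Fin k, W (idxb i) (idxb j) =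
      4 * X (idxb i) (idxb j) - 2 * X idx1 (idxb i) - 2 * X idx1 (idxb j) + 1)
    (hWvv : ∀ i j : Fin D, W (idxv i) (idxv j) = X (idxv i) (idxv j))
    (hW1v : ∀ i : Fin D, W idx1 (idxv i) = X idx1 (idxv i))
    (hW1σ : ∀ i : Fin k, W idx1 (idxb i) = 2 * X idx1 (idxb i) - 1)
    (hWvσ : ∀ (i : Fin D) (j : Fin k),
      W (idxv i) (idxb j) = 2 * X (idxv i) (idxb j) - X idx1 (idxv i)) :
    W.PosSemidef ∧ (∀ i : Fin k, W (idxb i) (idxb i) = 1) ∧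
      (∑ j : Fin D, W (idxv j) (idxv j) = ∑ j : Fin D, X (idxv j) (idxv j)) := by

  have hXsym : ∀ p q : MTIdx k D, X q p = X p q := by
    intro p q
    have := hpsd.isHermitian.apply p q
    simpa using this
  have hWs : ∀ p q : MTIdx k D, W q p = W p q := by
    intro p q
    have := congrFun (congrFun hWsymm p) q
    simpa [Matrix.transpose_apply] using this
  -- the change-of-variables matrix
  let A : Matrix (MTIdx k D) (MTIdx k D) ℝ := fun r c =>
    match r, c with
    | .inl _, .inl _ => 1
    | .inl _, .inr (.inl _) => -1
    | .inr (.inl i), .inr (.inl j) => if i = j then 2 else 0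
    | .inr (.inr i), .inr (.inr j) => if i = j then 1 else 0
    | _, _ => 0
  have hW : W = A.conjTranspose * X * A := by
    ext p q
    have expand : ∀ p q, (A.conjTranspose * X * A) p q = ∑ r, ∑ s, A r p * X r s * A s q := by
      intro p q
      simp only [Matrix.mul_apply, Matrix.conjTranspose_apply, star_trivial,
        Finset.sum_mul]
      rw [Finset.sum_comm]
    rw [expand]
    obtain ⟨⟩ | p | p := p <;> obtain ⟨⟩ | q | q := q <;>
      simp only [A, Fintype.sum_sum_type, Fintype.sum_unique, mul_ite, ite_mul,
        mul_zero, zero_mul, mul_one, one_mul, mul_neg, neg_mul,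
        Finset.sum_add_distrib, neg_ite', Finset.sum_ite_eq, Finset.sum_ite_eq',
        Finset.mem_univ, if_true, Finset.sum_const_zero, Finset.sum_neg,
        add_zero, zero_add, neg_neg, neg_zero]
    · rw [hW11, h11]
    · rw [hW1σ q, h11]; ring
    · exact hW1v q
    · rw [hWs idx1 (idxb p), hW1σ p, h11]; linarith [hXsym idx1 (idxb p)]
    · rw [hWσσ p q]; linarith [hXsym idx1 (idxb p), h11]
    · rw [hWs (idxv q) (idxb p), hWvσ q p]
      linarith [hXsym idx1 (idxv q), hXsym (idxb p) (idxv q)]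
    · rw [hWs idx1 (idxv p), hW1v p]; linarith [hXsym idx1 (idxv p)]
    · rw [hWvσ p q]; linarith [hXsym idx1 (idxv p)]
    · exact hWvv p q

  refine ⟨hW ▸ hpsd.conjTranspose_mul_mul_same A, fun i => ?_, Finset.sum_congr rfl fun j _ => hWvv j j⟩
  rw [hWσσ i i, ← h1b i]; ring
end
end
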